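/- Let Δ(z,y) denote the formula z_0≐y_{00} ∧ y_{01}≐y_{10} ∧ z_1≐y_{11}, and for χ ∈ Fmd3^1 let χz := ∃x(x≐z ∧ χ). Then for all φ, ψ ∈ Fmd3^1: (C2) Ax ⊢d3 (φ∘ψ)z ↔ ∃y(Δ(z,y) ∧ φy_0 ∧ ψy_1); (C1) Ax ⊢d3 [¬(φ∘ψ)]z ↔ ¬∃y(Δ(z,y) ∧ φy_0 ∧ ψy_1); and consequently (C) Ax ⊢d3 [¬(φ∘ψ)]z ↔ ¬[(φ∘ψ)z]. -/

import Mathlib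

/- Core: the logic Ld3 : syntax, proof system, semantics, Gödel numbering. -/

inductive Var : Type
  | x
  | y
  | z
deriving DecidableEq

def Var.toNat : Var → Nat
  | .x => 0
  | .y => 1
  | .z => 2

/-- Formulas of the logic `Ld3`: one atomic formula `P(x,y,z)`, connectives `∨, ¬`
and quantifiers `∃x, ∃y, ∃z`. -/
inductive Fmd3 : Type
  | P : Fmd3
  | or : Fmd3 → Fmd3 → Fmd3
  | not : Fmd3 → Fmd3
  | ex : Var → Fmd3 → Fmd3
deriving DecidableEq

namespace Fmd3

def and (φ ψ : Fmd3) : Fmd3 := .not (.or (.not φ) (.not ψ))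

def imp (φ ψ : Fmd3) : Fmd3 := .or (.not φ) ψ

def iff (φ ψ : Fmd3) : Fmd3 := (φ.imp ψ).and (ψ.imp φ)

def all (v : Var) (φ : Fmd3) : Fmd3 := .not (.ex v (.not φ))

def freeVars : Fmd3 → Finset Var
  | .P => {Var.x, Var.y, Var.z}
  | .or a b => a.freeVars ∪ b.freeVars
  | .not a => a.freeVars
  | .ex v a => a.freeVars.erase v

/-- `Fmd3⁰`: sentences. -/
def IsSentence (φ : Fmd3) : Prop := φ.freeVars = ∅

/-- `Fmd3¹`: formulas whose only free variable is `x`. -/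
def OneFree (φ : Fmd3) : Prop := φ.freeVars ⊆ {Var.x}

/-- `φ` is a propositional tautology: every Boolean valuation that respects
`∨` and `¬` (treating other formulas as propositional atoms) makes `φ` true. -/
def Taut (φ : Fmd3) : Prop :=
  ∀ v : Fmd3 → Bool,
    (∀ a b : Fmd3, v (.or a b) = (v a || v b)) →
    (∀ a : Fmd3, v (.not a) = !(v a)) →
    v φ = true

/-- Satisfaction of an `Fmd3` formula in a model `(M, R)` under evaluation `e`. -/
def Sat (M : Type) (R : M → M → M → Prop) : Fmd3 → (Var → M) → Prop
  | .P, e => R (e .x) (e .y) (e .z)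
  | .or a b, e => Sat M R a e ∨ Sat M R b e
  | .not a, e => ¬ Sat M R a e
  | .ex v a, e => ∃ m : M, Sat M R a (Function.update e v m)

/-- A standard (injective) Gödel numbering of `Fmd3`. -/
def encode : Fmd3 → Nat
  | .P => 0
  | .or a b => 4 * Nat.pair a.encode b.encode + 1
  | .not a => 4 * a.encode + 2
  | .ex v a => 4 * Nat.pair v.toNat a.encode + 3

end Fmd3

/-- The Hilbert-style proof system `⊢d3`, with rules Modus Ponens and Generalization,
and axiom schemes ((1))–((7)). -/
inductive Prf (T : Set Fmd3) : Fmd3 → Prop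
  | hyp {φ : Fmd3} : φ ∈ T → Prf T φ
  | taut {φ : Fmd3} : φ.Taut → Prf T φ
  | ax2 (v : Var) (φ ψ : Fmd3) :
      Prf T ((Fmd3.all v (φ.imp ψ)).imp ((Fmd3.ex v φ).imp (Fmd3.ex v ψ)))
  | ax3 (v : Var) (φ : Fmd3) : Prf T (φ.imp (.ex v φ))
  | ax4 (v : Var) (φ : Fmd3) : Prf T ((Fmd3.ex v (.ex v φ)).imp (.ex v φ))
  | ax5 (v : Var) (φ ψ : Fmd3) :
      Prf T ((Fmd3.ex v (φ.or ψ)).iff ((Fmd3.ex v φ).or (.ex v ψ)))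
  | ax6 (v : Var) (φ : Fmd3) :
      Prf T ((Fmd3.ex v (.not (.ex v φ))).imp (.not (.ex v φ)))
  | ax7 (v w : Var) (φ : Fmd3) :
      Prf T ((Fmd3.ex v (.ex w φ)).imp (.ex w (.ex v φ)))
  | mp {φ ψ : Fmd3} : Prf T (φ.imp ψ) → Prf T φ → Prf T ψ
  | gen {φ : Fmd3} (v : Var) : Prf T φ → Prf T (.all v φ)

/-- Semantic consequence for `Ld3`: every model of `T` satisfies `φ` under every
evaluation. -/
def SemConsD (T : Set Fmd3) (φ : Fmd3) : Prop :=
  ∀ (M : Type) (_ : Nonempty M) (R : M → M → M → Prop),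
    (∀ ψ ∈ T, ∀ e : Var → M, ψ.Sat M R e) → ∀ e : Var → M, φ.Sat M R e

/-- Validity for `Ld3`. -/
def ValidD (φ : Fmd3) : Prop := SemConsD ∅ φ

/-- A set of `Fmd3`-formulas is recursive (decidable w.r.t. the standard
Gödel numbering). -/
def RecSetD (S : Set Fmd3) : Prop :=
  ∃ g : Nat → Bool, Computable g ∧ ∀ φ : Fmd3, φ ∈ S ↔ g φ.encode = true

/- Parameter formulas δxy, δxz, p0, p1; simulated equality and substitution;
pairing axioms Ax and SAx; the relation-algebra and cylindric-algebra reducts. -/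

structure Params where
  dxy : Fmd3
  dxz : Fmd3
  p0 : Fmd3
  p1 : Fmd3

/-- The required free-variable sets of the parameter formulas. -/
def GoodParams (P : Params) : Prop :=
  P.dxy.freeVars = {Var.x, Var.y} ∧ P.dxz.freeVars = {Var.x, Var.z} ∧
    P.p0.freeVars = {Var.x, Var.y} ∧ P.p1.freeVars = {Var.x, Var.y}

/-- A provably true formula. -/
def trueF (P : Params) : Fmd3 := P.dxy.or P.dxy.not

/-- Simulated equality `u ≐ v` between variables. -/
def eqvF (P : Params) : Var → Var → Fmd3
  | .x, .y => P.dxy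
  | .y, .x => P.dxy
  | .x, .z => P.dxz
  | .z, .x => P.dxz
  | .y, .z => .ex .x (P.dxy.and P.dxz)
  | .z, .y => .ex .x (P.dxy.and P.dxz)
  | _, _ => trueF P

/- Tarski-style simulated substitution `φ⟨u,v⟩` for `φ` with free variables
among `{x,y}`. -/
def sXZ (P : Params) (φ : Fmd3) : Fmd3 := .ex .y ((eqvF P .y .z).and φ)
def sYZ (P : Params) (φ : Fmd3) : Fmd3 := .ex .x ((eqvF P .x .y).and (sXZ P φ))
def sYX (P : Params) (φ : Fmd3) : Fmd3 := .ex .z ((eqvF P .x .z).and (sYZ P φ))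
def sZX (P : Params) (φ : Fmd3) : Fmd3 := .ex .y ((eqvF P .y .z).and (sYX P φ))
def sZY (P : Params) (φ : Fmd3) : Fmd3 := .ex .x ((eqvF P .x .z).and φ)
def sXX (P : Params) (φ : Fmd3) : Fmd3 := .ex .y ((eqvF P .x .y).and φ)
def sYY (P : Params) (φ : Fmd3) : Fmd3 := .ex .x ((eqvF P .x .y).and φ)
def sZZ (P : Params) (φ : Fmd3) : Fmd3 := .ex .x ((eqvF P .x .z).and (sXX P φ))

def subst2 (P : Params) (φ : Fmd3) : Var → Var → Fmd3
  | .x, .y => φ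
  | .x, .z => sXZ P φ
  | .y, .z => sYZ P φ
  | .y, .x => sYX P φ
  | .z, .x => sZX P φ
  | .z, .y => sZY P φ
  | .x, .x => sXX P φ
  | .y, .y => sYY P φ
  | .z, .z => sZZ P φ

/-- The third variable, distinct from two given distinct variables. -/
def third : Var → Var → Var
  | .x, .y => .z
  | .y, .x => .z
  | .x, .z => .y
  | .z, .x => .y
  | .y, .z => .x
  | .z, .y => .x
  | v, _ => v

def pform (P : Params) (k : Bool) (u v : Var) : Fmd3 :=
  subst2 P (if k then P.p1 else P.p0) u v

/-- `u_i ≐ v_∅` for distinct `u`, `v`, where the binary sequence `i` is given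
in reverse order. -/
def peqDrev (P : Params) (u v : Var) : List Bool → Fmd3
  | [] => eqvF P u v
  | [k] => pform P k u v
  | k :: rest => .ex (third u v) ((peqDrev P u (third u v) rest).and (pform P k (third u v) v))

def peqD2 (P : Params) (u v : Var) (i j : List Bool) : Fmd3 :=
  match j with
  | [] => peqDrev P u v i.reverse
  | _ => .ex (third u v)
      ((peqDrev P u (third u v) i.reverse).and (peqDrev P v (third u v) j.reverse))

/-- The formula `u_i ≐ v_j` simulating `p_{i_n} ⋯ p_{i_0} u = p_{j_k} ⋯ p_{j_0} v`. -/
def peq (P : Params) (u : Var) (i : List Bool) (v : Var) (j : List Bool) : Fmd3 :=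
  if i = [] ∧ j = [] then eqvF P u v
  else if u = v then
    match u with
    | .x => .ex .y ((eqvF P .x .y).and (peqD2 P .x .y i j))
    | .y => .ex .x ((eqvF P .x .y).and (peqD2 P .x .y i j))
    | .z => .ex .x ((peqDrev P .z .x i.reverse).and (peqDrev P .z .x j.reverse))
  else peqD2 P u v i j

def conjF (P : Params) : List Fmd3 → Fmd3
  | [] => trueF P
  | [a] => a
  | a :: rest => a.and (conjF P rest)

def vars3 : List Var := [.x, .y, .z]

def seqsLen : Nat → List (List Bool)
  | 0 => [[]]
  | n + 1 => (seqsLen n).flatMap fun l => [false :: l, true :: l]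

/-- `H`: all binary sequences of length at most 3. -/
def seqH : List (List Bool) := seqsLen 0 ++ seqsLen 1 ++ seqsLen 2 ++ seqsLen 3

def seqH2 : List (List Bool) := seqsLen 0 ++ seqsLen 1 ++ seqsLen 2

/-- (A1): transitivity of `≐`. -/
def axA1 (P : Params) : List Fmd3 :=
  vars3.flatMap fun u => vars3.flatMap fun v => vars3.flatMap fun w =>
    seqH.flatMap fun i => seqH.flatMap fun j => seqH.map fun k =>
      ((peq P u i v j).and (peq P v j w k)).imp (peq P u i w k)

/-- (A2): congruence of `≐` w.r.t. the projections. -/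
def axA2 (P : Params) : List Fmd3 :=
  vars3.flatMap fun u => vars3.flatMap fun v =>
    seqH2.flatMap fun i => seqH2.flatMap fun j => [false, true].map fun k =>
      ((peq P u i v j).and (peq P u (i ++ [k]) u (i ++ [k]))).imp
        (peq P u (i ++ [k]) v (j ++ [k]))

/-- (A3): existence of pairs. -/
def axA3 (P : Params) : List Fmd3 :=
  vars3.flatMap fun u => vars3.flatMap fun v =>
    (vars3.filter fun w => decide (w ≠ u ∧ w ≠ v)).flatMap fun w =>
      seqH.flatMap fun i => seqH.map fun j =>
        ((peq P u i u i).and (peq P v j v j)).imp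
          (.ex w ((peq P w [false] u i).and (peq P w [true] v j)))

/-- (A4): `∃w (u ≐ w)`. -/
def axA4 (P : Params) : List Fmd3 :=
  vars3.flatMap fun u => vars3.map fun w => .ex w (eqvF P u w)

/-- The pairing axiom `Ax`. -/
def AxF (P : Params) : Fmd3 := conjF P (axA1 P ++ axA2 P ++ axA3 P ++ axA4 P)

/-- (A5), first half: uniqueness of pairs. -/
def axA5a (P : Params) : Fmd3 :=
  ((peq P .x [false] .y [false]).and (peq P .x [true] .y [true])).imp (eqvF P .x .y)

/-- (A5), second half: the two projections have the same domain. -/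
def axA5b (P : Params) : Fmd3 :=
  (peq P .x [false] .x [false]).iff (peq P .x [true] .x [true])

/-- The strong pairing axiom `SAx`. -/
def SAxF (P : Params) : Fmd3 := (AxF P).and ((axA5a P).and (axA5b P))

/-- `pair := ∃y p0 ∧ ∃y p1`. -/
def pairF (P : Params) : Fmd3 := (Fmd3.ex .y P.p0).and (.ex .y P.p1)

/-- `φu_i := ∃x(x ≐ u_i ∧ φ)` for `u ∈ {y,z}`. -/
def appA (P : Params) (φ : Fmd3) (u : Var) (i : List Bool) : Fmd3 :=
  .ex .x ((peq P .x [] u i).and φ)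

/-- Relation composition `φ ∘ ψ`. -/
def compF (P : Params) (φ ψ : Fmd3) : Fmd3 :=
  .ex .y ((appA P φ .y [false]).and ((appA P ψ .y [true]).and
    ((peq P .x [false] .y [false, false]).and
      ((peq P .y [false, true] .y [true, false]).and (peq P .y [true, true] .x [true])))))

/-- Converse `φ⌣`. -/
def convF (P : Params) (φ : Fmd3) : Fmd3 :=
  .ex .y ((appA P φ .y []).and ((peq P .y [false] .x [true]).and (peq P .y [true] .x [false])))

/-- Identity `Id := x_0 ≐ x_1`. -/
def IdF (P : Params) : Fmd3 := peq P .x [false] .x [true]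

/-- Complement `−φ := pair ∧ ¬φ`. -/
def negF (P : Params) (φ : Fmd3) : Fmd3 := (pairF P).and φ.not

/-- The universe `dra` of the relation algebra reduct. -/
def dra (P : Params) : Set Fmd3 :=
  {φ | ∃ ψ : Fmd3, ψ.OneFree ∧ Prf {AxF P} (φ.iff (compF P ψ (IdF P)))}

/-- The congruence `φ ≡_Ax ψ`. -/
def REqv (P : Params) (φ ψ : Fmd3) : Prop := Prf {AxF P} (φ.iff ψ)

/-- `Triplet := x_{11} ≐ x_{11}`. -/
def TripletF (P : Params) : Fmd3 := peq P .x [true, true] .x [true, true]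

/-- `φx_i := ∃y(y ≐ x_i ∧ φy)` for `φ ∈ Fmd3¹`. -/
def appX (P : Params) (φ : Fmd3) (i : List Bool) : Fmd3 :=
  .ex .y ((peq P .y [] .x i).and (appA P φ .y []))

/-- `(0) := 0`, `(1) := 10`, `(2) := 11`. -/
def dgt (i : Fin 3) : List Bool :=
  if i = 0 then [false] else if i = 1 then [true, false] else [true, true]

/-- The formula `T_i`. -/
def TiF (P : Params) (i : Fin 3) : Fmd3 :=
  (appX P (TripletF P) [false]).and ((appX P (TripletF P) [true]).and
    (conjF P (((List.finRange 3).filter fun j => decide (j ≠ i)).map fun j =>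
      peq P .x (false :: dgt j) .x (true :: dgt j))))

/-- Cylindrification `c_i φ := φ ∘ T_i`. -/
def ciF (P : Params) (i : Fin 3) (φ : Fmd3) : Fmd3 := compF P φ (TiF P i)

/-- Diagonal `d_{ij} := Triplet x_1 ∧ x_{1(i)} ≐ x_{1(j)}`. -/
def dijF (P : Params) (i j : Fin 3) : Fmd3 :=
  (appX P (TripletF P) [true]).and (peq P .x (true :: dgt i) .x (true :: dgt j))

/-- Complement in `Dca`: `−φ := Triplet x_1 ∧ ¬φ`. -/
def negC (P : Params) (φ : Fmd3) : Fmd3 := (appX P (TripletF P) [true]).and φ.not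

/-- The universe `dca` of the cylindric reduct. -/
def dca (P : Params) : Set Fmd3 :=
  {φ | ∃ ψ : Fmd3, ψ.OneFree ∧
    Prf {SAxF P} (φ.iff ((appX P ψ [true]).and (appX P (TripletF P) [true])))}

/-- The congruence `φ ≡_SAx ψ`. -/
def CEqv (P : Params) (φ ψ : Fmd3) : Prop := Prf {SAxF P} (φ.iff ψ)

/-- The formula `Δ(z,y) := z_0 ≐ y_{00} ∧ y_{01} ≐ y_{10} ∧ z_1 ≐ y_{11}`. -/
def deltaZY (P : Params) : Fmd3 :=
  (peq P .z [false] .y [false, false]).and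
    ((peq P .y [false, true] .y [true, false]).and (peq P .z [true] .y [true, true]))

/-! Under `Ax` the simulated equality `x ≐ z` is a congruence for the projections: by (A1), (A2)
and the symmetry of `≐` between distinct variables, `x ≐ z` lets one trade `x_k ≐ y_j` for
`z_k ≐ y_j`. Hence, given `x ≐ z`, the formula under `∃y` in `φ ∘ ψ` is equivalent to
`Δ(z,y) ∧ φy_0 ∧ ψy_1`. As `∃x (x ≐ z)` is an instance of (A4) and `x` is not free in
`∃y(Δ(z,y) ∧ φy_0 ∧ ψy_1)`, the one-point rule — if `⊢ ∃x G`, `x ∉ FV(R)` and `G ⊢ S ↔ R`, then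
`⊢ ∃x(G ∧ S) ↔ R` and `⊢ ∃x(G ∧ ¬S) ↔ ¬R` — gives (C2) and (C1), and (C) follows
propositionally. -/

namespace Fmd3

theorem freeVars_and (a b : Fmd3) : (a.and b).freeVars = a.freeVars ∪ b.freeVars := by
  simp [Fmd3.and, freeVars]

theorem freeVars_ex_and_subset {a b : Fmd3} {s t : Finset Var} (w : Var)
    (ha : a.freeVars ⊆ s) (hb : b.freeVars ⊆ t) :
    (Fmd3.ex w (a.and b)).freeVars ⊆ (s ∪ t).erase w :=
  Finset.erase_subset_erase w ((freeVars_and a b).trans_subset (Finset.union_subset_union ha hb))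

end Fmd3

namespace Prf

open Fmd3

variable {T : Set Fmd3} {a b c : Fmd3}

theorem of_taut₁ (ha : Prf T a) (h : Taut (a.imp b)) : Prf T b :=
  mp (taut h) ha

theorem of_taut₂ (ha : Prf T a) (hb : Prf T b) (h : Taut (a.imp (b.imp c))) : Prf T c :=
  mp (mp (taut h) ha) hb

theorem of_taut₃ {d : Fmd3} (ha : Prf T a) (hb : Prf T b) (hc : Prf T c)
    (h : Taut (a.imp (b.imp (c.imp d)))) : Prf T d :=
  mp (of_taut₂ ha hb h) hc

theorem imp_trans (hab : Prf T (a.imp b)) (hbc : Prf T (b.imp c)) : Prf T (a.imp c) :=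
  of_taut₂ hab hbc fun v hor hnot => by grind [imp]

theorem ex_mono (w : Var) (h : Prf T (a.imp b)) : Prf T ((Fmd3.ex w a).imp (.ex w b)) :=
  mp (ax2 w a b) (gen w h)

theorem ex_or_imp (w : Var) (a b : Fmd3) :
    Prf T ((Fmd3.ex w (a.or b)).imp ((Fmd3.ex w a).or (.ex w b))) :=
  of_taut₁ (ax5 w a b) fun v hor hnot => by grind [imp, iff, Fmd3.and]

theorem ex_imp_of_notMem_freeVars (w : Var) :
    ∀ {a : Fmd3}, w ∉ a.freeVars → Prf T ((Fmd3.ex w a).imp a)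
  | .P, h => absurd (by cases w <;> simp [freeVars]) h
  | .or a b, h => by
    simp only [freeVars, Finset.mem_union, not_or] at h
    exact imp_trans (ex_or_imp w a b) (of_taut₂ (ex_imp_of_notMem_freeVars w h.1)
      (ex_imp_of_notMem_freeVars w h.2) fun v hor hnot => by grind [imp])
  | .not a, h => by
    have hex : Prf T ((Fmd3.ex w a).imp a) := ex_imp_of_notMem_freeVars w (a := a) h
    have contra : Prf T (a.not.imp (Fmd3.ex w a).not) :=
      of_taut₁ hex fun v hor hnot => by grind [imp]
    have neg_ax3 : Prf T ((Fmd3.ex w a).not.imp a.not) :=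
      of_taut₁ (ax3 w a) fun v hor hnot => by grind [imp]
    exact imp_trans (ex_mono w contra) (imp_trans (ax6 w a) neg_ax3)
  | .ex u a, h => by
    by_cases hwu : w = u
    · subst hwu; exact ax4 w a
    · have ha : w ∉ a.freeVars := fun hw => h (Finset.mem_erase.mpr ⟨hwu, hw⟩)
      exact imp_trans (ax7 w u a) (ex_mono u (ex_imp_of_notMem_freeVars w ha))

theorem and_ex_imp_ex_and {w : Var} (hw : w ∉ a.freeVars) (b : Fmd3) :
    Prf T ((a.and (Fmd3.ex w b)).imp (.ex w (a.and b))) := by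
  have split : Prf T ((Fmd3.ex w b).imp (.ex w (a.not.or (a.and b)))) :=
    ex_mono w (taut fun v hor hnot => by grind [imp, Fmd3.and])
  have drop : Prf T ((Fmd3.ex w a.not).imp a.not) := ex_imp_of_notMem_freeVars w hw
  exact of_taut₂ (imp_trans split (ex_or_imp w _ _)) drop fun v hor hnot => by
    grind [imp, Fmd3.and]

variable {g : Fmd3} {w : Var}

theorem iff_intro (hab : Prf T (a.imp b)) (hba : Prf T (b.imp a)) : Prf T (a.iff b) :=
  of_taut₂ hab hba fun v hor hnot => by grind [imp, iff, Fmd3.and]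

theorem iff_not_of_iff_of_iff_not (hac : Prf T (a.iff c)) (hbc : Prf T (b.iff c.not)) :
    Prf T (b.iff a.not) :=
  of_taut₂ hac hbc fun v hor hnot => by
    simp only [iff, imp, Fmd3.and, hor, hnot]
    cases v a <;> cases v b <;> cases v c <;> rfl

theorem ex_imp_of_imp (hw : w ∉ b.freeVars) (h : Prf T (a.imp b)) :
    Prf T ((Fmd3.ex w a).imp b) :=
  imp_trans (ex_mono w h) (ex_imp_of_notMem_freeVars w hw)

theorem imp_ex_of_and_imp (hw : w ∉ a.freeVars) (hg : Prf T (Fmd3.ex w g))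
    (h : Prf T ((a.and g).imp b)) : Prf T (a.imp (Fmd3.ex w b)) :=
  imp_trans (of_taut₁ hg fun v hor hnot => by grind [imp, Fmd3.and])
    (imp_trans (and_ex_imp_ex_and hw g) (ex_mono w h))

theorem and_ex_imp_ex (hw : w ∉ g.freeVars) (h : Prf T ((g.and a).imp b)) :
    Prf T ((g.and (Fmd3.ex w a)).imp (Fmd3.ex w b)) :=
  imp_trans (and_ex_imp_ex_and hw a) (ex_mono w h)

section OnePoint

variable (hg : Prf T (Fmd3.ex w g)) (hw : w ∉ b.freeVars)
  (hab : Prf T ((g.and a).imp b)) (hba : Prf T ((g.and b).imp a))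
include hg hw hab hba

theorem ex_and_iff : Prf T ((Fmd3.ex w (g.and a)).iff b) :=
  iff_intro (ex_imp_of_imp hw hab)
    (imp_ex_of_and_imp hw hg (of_taut₁ hba fun v hor hnot => by grind [imp, Fmd3.and]))

theorem ex_and_not_iff : Prf T ((Fmd3.ex w (g.and a.not)).iff b.not) :=
  iff_intro
    (ex_imp_of_imp (b := b.not) hw (of_taut₁ hba fun v hor hnot => by grind [imp, Fmd3.and]))
    (imp_ex_of_and_imp (a := b.not) hw hg
      (of_taut₁ hab fun v hor hnot => by grind [imp, Fmd3.and]))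

end OnePoint

end Prf

open Fmd3

section Pairing

variable {P : Params}

theorem taut_conjF_imp_of_mem (P : Params) :
    ∀ {l : List Fmd3} {a : Fmd3}, a ∈ l → Taut ((conjF P l).imp a)
  | [b], a, h => by
    obtain rfl := List.mem_singleton.mp h
    exact fun v hor hnot => by grind [conjF, imp]
  | b :: c :: l, a, h => by
    rcases List.mem_cons.mp h with rfl | h
    · exact fun v hor hnot => by grind [conjF, imp, Fmd3.and]
    · have ih := taut_conjF_imp_of_mem P h
      exact fun v hor hnot => by
        have := ih v hor hnot
        grind [conjF, imp, Fmd3.and]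

theorem prf_of_mem_axioms {c : Fmd3} (h : c ∈ axA1 P ++ axA2 P ++ axA3 P ++ axA4 P) :
    Prf {AxF P} c :=
  Prf.of_taut₁ (Prf.hyp rfl) (taut_conjF_imp_of_mem P h)

theorem mem_vars3 (u : Var) : u ∈ vars3 := by
  cases u <;> simp [vars3]

theorem prf_axA1 (u v w : Var) {i j k : List Bool} (hi : i ∈ seqH) (hj : j ∈ seqH)
    (hk : k ∈ seqH) :
    Prf {AxF P} (((peq P u i v j).and (peq P v j w k)).imp (peq P u i w k)) := by
  refine prf_of_mem_axioms (List.mem_append_left _ (List.mem_append_left _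
    (List.mem_append_left _ ?_)))
  simp only [axA1, List.mem_flatMap, List.mem_map]
  exact ⟨u, mem_vars3 u, v, mem_vars3 v, w, mem_vars3 w, i, hi, j, hj, k, hk, rfl⟩

theorem prf_axA2 (u v : Var) {i j : List Bool} (k : Bool) (hi : i ∈ seqH2) (hj : j ∈ seqH2) :
    Prf {AxF P} (((peq P u i v j).and (peq P u (i ++ [k]) u (i ++ [k]))).imp
      (peq P u (i ++ [k]) v (j ++ [k]))) := by
  refine prf_of_mem_axioms (List.mem_append_left _ (List.mem_append_left _
    (List.mem_append_right _ ?_)))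
  simp only [axA2, List.mem_flatMap, List.mem_map]
  exact ⟨u, mem_vars3 u, v, mem_vars3 v, i, hi, j, hj, k, by cases k <;> simp, rfl⟩

theorem prf_axA4 (u w : Var) : Prf {AxF P} (Fmd3.ex w (eqvF P u w)) := by
  refine prf_of_mem_axioms (List.mem_append_right _ ?_)
  simp only [axA4, List.mem_flatMap, List.mem_map]
  exact ⟨u, mem_vars3 u, w, mem_vars3 w, rfl⟩

theorem third_comm (u v : Var) : third v u = third u v := by
  cases u <;> cases v <;> rfl

theorem third_ne {u v : Var} (huv : u ≠ v) : third u v ≠ u ∧ third u v ≠ v := by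
  cases u <;> cases v <;> simp_all [third]

theorem peq_of_ne_cons {u v : Var} (huv : u ≠ v) (i : List Bool) (k : Bool) (j : List Bool) :
    peq P u i v (k :: j) = .ex (third u v)
      ((peqDrev P u (third u v) i.reverse).and (peqDrev P v (third u v) (k :: j).reverse)) := by
  rw [peq.eq_def, if_neg (by simp), if_neg huv]
  rfl

theorem peq_symm {T : Set Fmd3} {u v : Var} (huv : u ≠ v) :
    ∀ {i j : List Bool}, i ≠ [] → j ≠ [] → Prf T ((peq P u i v j).imp (peq P v j u i))
  | k :: i, l :: j, _, _ => by
    rw [peq_of_ne_cons huv, peq_of_ne_cons huv.symm, third_comm]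
    exact Prf.ex_mono _ (Prf.taut fun v hor hnot => by grind [imp, Fmd3.and])

theorem peq_transport (u v w : Var) (huv : u ≠ v) (huw : u ≠ w) (k : Bool) {j : List Bool}
    (hj : j ∈ seqH) (hj₀ : j ≠ []) :
    Prf {AxF P} (((eqvF P u v).and (peq P u [k] w j)).imp (peq P v [k] w j)) := by
  have hk : [k] ∈ seqH := by cases k <;> decide
  have symm : Prf {AxF P} ((peq P u [k] w j).imp (peq P w j u [k])) :=
    peq_symm huw (List.cons_ne_nil k []) hj₀
  have refl : Prf {AxF P} ((peq P u [k] w j).imp (peq P u [k] u [k])) :=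
    Prf.of_taut₂ symm (prf_axA1 u w u hk hj hk) fun v hor hnot => by grind [imp, Fmd3.and]
  have cong : Prf {AxF P} (((eqvF P u v).and (peq P u [k] u [k])).imp (peq P v [k] u [k])) :=
    Prf.imp_trans (prf_axA2 u v (i := []) (j := []) k (by decide) (by decide))
      (peq_symm huv (List.cons_ne_nil k []) (List.cons_ne_nil k []))
  have trans : Prf {AxF P} (((peq P v [k] u [k]).and (peq P u [k] w j)).imp (peq P v [k] w j)) :=
    prf_axA1 v u w hk hk hj
  exact Prf.of_taut₃ refl cong trans fun v hor hnot => by grind [imp, Fmd3.and]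

section FreeVars

variable (hP : GoodParams P)
include hP

theorem freeVars_eqvF_subset {u v : Var} (huv : u ≠ v) : (eqvF P u v).freeVars ⊆ {u, v} := by
  obtain ⟨hxy, hxz, -, -⟩ := hP
  cases u <;> cases v <;> simp_all [eqvF, freeVars, Fmd3.and] <;> decide

theorem freeVars_pform_subset (k : Bool) {u v : Var} (huv : u ≠ v) :
    (pform P k u v).freeVars ⊆ {u, v} := by
  obtain ⟨hxy, hxz, h0, h1⟩ := hP
  have hq : (if k then P.p1 else P.p0).freeVars ⊆ {Var.x, Var.y} := by
    cases k <;> simp [h0, h1]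
  intro a ha
  have := @hq a
  cases u <;> cases v <;>
    simp_all [pform, subst2, sXZ, sYZ, sYX, sZX, sZY, eqvF, freeVars, Fmd3.and] <;> grind

theorem freeVars_peqDrev_subset :
    ∀ (l : List Bool) {u v : Var}, u ≠ v → (peqDrev P u v l).freeVars ⊆ {u, v}
  | [], _, _, huv => freeVars_eqvF_subset hP huv
  | [k], _, _, huv => freeVars_pform_subset hP k huv
  | k :: k' :: l, u, v, huv => by
    obtain ⟨hwu, hwv⟩ := third_ne huv
    refine (freeVars_ex_and_subset _ (freeVars_peqDrev_subset (k' :: l) hwu.symm)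
      (freeVars_pform_subset hP k hwv)).trans ?_
    intro a
    simp only [Finset.mem_erase, Finset.mem_union, Finset.mem_insert, Finset.mem_singleton]
    tauto

theorem freeVars_peqD2_subset {u v : Var} (huv : u ≠ v) (i j : List Bool) :
    (peqD2 P u v i j).freeVars ⊆ {u, v} := by
  cases j with
  | nil => exact freeVars_peqDrev_subset hP _ huv
  | cons k j =>
    obtain ⟨hwu, hwv⟩ := third_ne huv
    refine (freeVars_ex_and_subset _ (freeVars_peqDrev_subset hP _ hwu.symm)
      (freeVars_peqDrev_subset hP _ hwv.symm)).trans ?_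
    intro a
    simp only [Finset.mem_erase, Finset.mem_union, Finset.mem_insert, Finset.mem_singleton]
    tauto

theorem freeVars_peq_subset {u v : Var} {i j : List Bool} (h : u ≠ v ∨ ¬(i = [] ∧ j = [])) :
    (peq P u i v j).freeVars ⊆ {u, v} := by
  unfold peq
  split_ifs with hij huv
  · exact freeVars_eqvF_subset hP (h.resolve_right (not_not.mpr hij))
  · subst huv
    cases u
    · exact (freeVars_ex_and_subset _ (freeVars_eqvF_subset hP (by decide))
        (freeVars_peqD2_subset hP (by decide) i j)).trans (by decide)
    · exact (freeVars_ex_and_subset _ (freeVars_eqvF_subset hP (by decide))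
        (freeVars_peqD2_subset hP (by decide) i j)).trans (by decide)
    · exact (freeVars_ex_and_subset _ (freeVars_peqDrev_subset hP _ (by decide))
        (freeVars_peqDrev_subset hP _ (by decide))).trans (by decide)
  · exact freeVars_peqD2_subset hP huv i j

theorem freeVars_appA_subset {φ : Fmd3} (hφ : φ.OneFree) {u : Var} (hu : u ≠ .x)
    (i : List Bool) : (appA P φ u i).freeVars ⊆ {u} := by
  refine (freeVars_ex_and_subset _ (freeVars_peq_subset hP (Or.inl hu.symm)) hφ).trans ?_
  intro a
  simp only [Finset.mem_erase, Finset.mem_union, Finset.mem_insert, Finset.mem_singleton]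
  tauto

end FreeVars

/-- `compF P φ ψ` is `∃y, compBody P φ ψ`. -/
def compBody (P : Params) (φ ψ : Fmd3) : Fmd3 :=
  (appA P φ .y [false]).and ((appA P ψ .y [true]).and
    ((peq P .x [false] .y [false, false]).and
      ((peq P .y [false, true] .y [true, false]).and (peq P .y [true, true] .x [true]))))

def compBodyZ (P : Params) (φ ψ : Fmd3) : Fmd3 :=
  (deltaZY P).and ((appA P φ .y [false]).and (appA P ψ .y [true]))

theorem prf_compBody_imp_compBodyZ (φ ψ : Fmd3) :
    Prf {AxF P} (((eqvF P .x .z).and (compBody P φ ψ)).imp (compBodyZ P φ ψ)) := by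
  have h₀ : Prf {AxF P} (((eqvF P .x .z).and (peq P .x [false] .y [false, false])).imp
      (peq P .z [false] .y [false, false])) :=
    peq_transport .x .z .y (by decide) (by decide) false (by decide) (by simp)
  have symm : Prf {AxF P}
      ((peq P .y [true, true] .x [true]).imp (peq P .x [true] .y [true, true])) :=
    peq_symm (by decide) (by simp) (by simp)
  have h₁ : Prf {AxF P} (((eqvF P .x .z).and (peq P .x [true] .y [true, true])).imp
      (peq P .z [true] .y [true, true])) :=
    peq_transport .x .z .y (by decide) (by decide) true (by decide) (by simp)
  unfold compBody compBodyZ deltaZY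
  exact Prf.of_taut₃ h₀ symm h₁ fun v hor hnot => by grind [imp, Fmd3.and]

theorem prf_compBodyZ_imp_compBody (φ ψ : Fmd3) :
    Prf {AxF P} (((eqvF P .x .z).and (compBodyZ P φ ψ)).imp (compBody P φ ψ)) := by
  have h₀ : Prf {AxF P} (((eqvF P .x .z).and (peq P .z [false] .y [false, false])).imp
      (peq P .x [false] .y [false, false])) :=
    peq_transport .z .x .y (by decide) (by decide) false (by decide) (by simp)
  have h₁ : Prf {AxF P} (((eqvF P .x .z).and (peq P .z [true] .y [true, true])).imp
      (peq P .x [true] .y [true, true])) :=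
    peq_transport .z .x .y (by decide) (by decide) true (by decide) (by simp)
  have symm : Prf {AxF P}
      ((peq P .x [true] .y [true, true]).imp (peq P .y [true, true] .x [true])) :=
    peq_symm (by decide) (by simp) (by simp)
  unfold compBody compBodyZ deltaZY
  exact Prf.of_taut₃ h₀ h₁ symm fun v hor hnot => by grind [imp, Fmd3.and]

theorem freeVars_compBodyZ_subset (hP : GoodParams P) {φ ψ : Fmd3} (hφ : φ.OneFree)
    (hψ : ψ.OneFree) : (compBodyZ P φ ψ).freeVars ⊆ {Var.y, Var.z} := by
  simp only [compBodyZ, deltaZY, freeVars_and, Finset.union_subset_iff]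
  refine ⟨⟨?_, ?_, ?_⟩, ?_, ?_⟩
  · exact (freeVars_peq_subset hP (Or.inl (by decide))).trans (by decide)
  · exact (freeVars_peq_subset hP (Or.inr (by simp))).trans (by decide)
  · exact (freeVars_peq_subset hP (Or.inl (by decide))).trans (by decide)
  · exact (freeVars_appA_subset hP hφ (by decide) _).trans (by decide)
  · exact (freeVars_appA_subset hP hψ (by decide) _).trans (by decide)

end Pairing

/-- **Theorem ((C2), (C1) and (C)).** For all `φ, ψ ∈ Fmd3¹`:
`Ax ⊢d3 (φ∘ψ)z ↔ ∃y(Δ(z,y) ∧ φy_0 ∧ ψy_1)`,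
`Ax ⊢d3 [¬(φ∘ψ)]z ↔ ¬∃y(Δ(z,y) ∧ φy_0 ∧ ψy_1)`, and consequently
`Ax ⊢d3 [¬(φ∘ψ)]z ↔ ¬[(φ∘ψ)z]`. -/
theorem comp_commutes_with_appZ (P : Params) (hP : GoodParams P)
    (φ ψ : Fmd3) (hφ : φ.OneFree) (hψ : ψ.OneFree) :
    Prf {AxF P} ((appA P (compF P φ ψ) .z []).iff
      (.ex .y ((deltaZY P).and ((appA P φ .y [false]).and (appA P ψ .y [true]))))) ∧
    Prf {AxF P} ((appA P (compF P φ ψ).not .z []).iff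
      (Fmd3.ex .y ((deltaZY P).and ((appA P φ .y [false]).and (appA P ψ .y [true])))).not) ∧
    Prf {AxF P} ((appA P (compF P φ ψ).not .z []).iff (appA P (compF P φ ψ) .z []).not) := by
  have hex : Prf {AxF P} (Fmd3.ex .x (eqvF P .x .z)) := prf_axA4 .z .x
  have hx : Var.x ∉ (Fmd3.ex .y (compBodyZ P φ ψ)).freeVars := fun h =>
    absurd (freeVars_compBodyZ_subset hP hφ hψ (Finset.mem_of_mem_erase h)) (by decide)
  have hy : Var.y ∉ (eqvF P .x .z).freeVars := by rw [eqvF, hP.2.1]; decide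
  have fwd := Prf.and_ex_imp_ex hy (prf_compBody_imp_compBodyZ φ ψ)
  have bwd := Prf.and_ex_imp_ex hy (prf_compBodyZ_imp_compBody φ ψ)
  have comp := Prf.ex_and_iff hex hx fwd bwd
  have compNot := Prf.ex_and_not_iff hex hx fwd bwd
  exact ⟨comp, compNot, Prf.iff_not_of_iff_of_iff_not comp compNot⟩
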